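/- arXiv:1709.09331 — 3 statements merged into one kernel-verified Lean document; each statement's English description precedes it below -/
import Mathlib

section
/- Let P be a finite poset. The map OR : C(P) → OR(P) defined by (OR(g))(x) = max{ g(y_1) + g(y_2) + ⋯ + g(y_k) | x = y_1 ⋖ y_2 ⋖ ⋯ ⋖ y_k with y_k maximal in P } is a bijection from the chain polytope to the order-reversing polytope, with inverse given by (OR^{-1}(f))(x) = f(x) − max{ f(y) | y ⋗ x in P̂ }, where f(M̂) = 0 for the adjoined maximal element M̂. Likewise, OP : C(P) → OP(P) defined by (OP(g))(x) = max{ g(y_1) + ⋯ + g(y_k) | y_1 ⋖ ⋯ ⋖ y_k = x with y_1 minimal in P } is a bijection with inverse (OP^{-1}(f))(x) = f(x) − max{ f(y) | y ⋖ x in P̂ }, where f(m̂) = 0 for the adjoined minimal element m̂. -/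
open scoped Classical

variable {P : Type*} [PartialOrder P]

/-- Membership in the chain polytope `C(P)`: nonnegative labels whose sum along every
chain is at most 1. -/
def InChainPolytope (P : Type*) [PartialOrder P] (g : P → ℝ) : Prop :=
  (∀ x : P, 0 ≤ g x) ∧ ∀ l : List P, l.Chain' (· < ·) → (l.map g).sum ≤ 1

/-- Membership in the order-reversing polytope `OR(P)`. -/
def InORPolytope (P : Type*) [PartialOrder P] (f : P → ℝ) : Prop :=
  (∀ x : P, 0 ≤ f x ∧ f x ≤ 1) ∧ ∀ ⦃x y : P⦄, x ≤ y → f y ≤ f x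

/-- Membership in the order-preserving polytope `OP(P)`. -/
def InOPPolytope (P : Type*) [PartialOrder P] (f : P → ℝ) : Prop :=
  (∀ x : P, 0 ≤ f x ∧ f x ≤ 1) ∧ ∀ ⦃x y : P⦄, x ≤ y → f x ≤ f y

/-- The poset `P̂`, obtained from `P` by adjoining a minimum `m̂ = ⊥` and a
maximum `M̂ = ⊤`. -/
abbrev PHat (P : Type*) := WithBot (WithTop P)

/-- The inclusion of `P` into `P̂`. -/
def toHat (x : P) : PHat P := ((x : WithTop P) : PHat P)

/-- Extension of an order-reversing labeling to `P̂`, with `f(m̂) = 1`, `f(M̂) = 0`. -/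
noncomputable def hatOR (f : P → ℝ) : PHat P → ℝ := fun y =>
  WithBot.recBotCoe 1 (fun w => WithTop.recTopCoe 0 f w) y

/-- Extension of an order-preserving labeling to `P̂`, with `f(m̂) = 0`, `f(M̂) = 1`. -/
noncomputable def hatOP (f : P → ℝ) : PHat P → ℝ := fun y =>
  WithBot.recBotCoe 0 (fun w => WithTop.recTopCoe 1 f w) y

/-- The saturated chains `x = y_1 ⋖ y_2 ⋖ ⋯ ⋖ y_k` from `x` up to a maximal element. -/
def maxChainsFrom (x : P) : Set (List P) :=
  {l | l.Chain' (· ⋖ ·) ∧ l.head? = some x ∧ ∃ z, l.getLast? = some z ∧ IsMax z}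

/-- The saturated chains `y_1 ⋖ ⋯ ⋖ y_k = x` from a minimal element up to `x`. -/
def maxChainsTo (x : P) : Set (List P) :=
  {l | l.Chain' (· ⋖ ·) ∧ (∃ a, l.head? = some a ∧ IsMin a) ∧ l.getLast? = some x}

/-- The maximal chains of `P` containing `e`. -/
def maxChainsThru (e : P) : Set (List P) :=
  {l | l.Chain' (· ⋖ ·) ∧ (∃ a, l.head? = some a ∧ IsMin a) ∧
    (∃ z, l.getLast? = some z ∧ IsMax z) ∧ e ∈ l}

/-- The transfer map `OR : C(P) → OR(P)`:
`(OR g)(x) = max{ g(y_1) + ⋯ + g(y_k) | x = y_1 ⋖ ⋯ ⋖ y_k, y_k maximal }`. -/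
noncomputable def ORmap (g : P → ℝ) (x : P) : ℝ :=
  sSup ((fun l => (l.map g).sum) '' maxChainsFrom x)

/-- The transfer map `OP : C(P) → OP(P)`:
`(OP g)(x) = max{ g(y_1) + ⋯ + g(y_k) | y_1 ⋖ ⋯ ⋖ y_k = x, y_1 minimal }`. -/
noncomputable def OPmap (g : P → ℝ) (x : P) : ℝ :=
  sSup ((fun l => (l.map g).sum) '' maxChainsTo x)

/-- The inverse transfer map: `(OR⁻¹ f)(x) = f(x) - max{ f(y) | y ⋗ x in P̂ }`. -/
noncomputable def ORinv (f : P → ℝ) (x : P) : ℝ :=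
  f x - sSup {v : ℝ | ∃ y : PHat P, toHat x ⋖ y ∧ v = hatOR f y}

/-- The inverse transfer map: `(OP⁻¹ f)(x) = f(x) - max{ f(y) | y ⋖ x in P̂ }`. -/
noncomputable def OPinv (f : P → ℝ) (x : P) : ℝ :=
  f x - sSup {v : ℝ | ∃ y : PHat P, y ⋖ toHat x ∧ v = hatOP f y}

/-- The piecewise-linear order ideal toggle on the order-reversing polytope:
the label of `e` is replaced by
`max{f(y) | y ⋗ e in P̂} + min{f(y) | y ⋖ e in P̂} - f(e)`. -/
noncomputable def tPL (e : P) (f : P → ℝ) : P → ℝ :=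
  Function.update f e
    (sSup {v : ℝ | ∃ y : PHat P, toHat e ⋖ y ∧ v = hatOR f y}
      + sInf {v : ℝ | ∃ y : PHat P, y ⋖ toHat e ∧ v = hatOR f y} - f e)

/-- The piecewise-linear antichain (chain polytope) toggle: the label of `e` is replaced
by `1 - max{ Σ g(y_i) | (y_1,…,y_k) a maximal chain of P containing e }`. -/
noncomputable def tauPL (e : P) (g : P → ℝ) : P → ℝ :=
  Function.update g e (1 - sSup ((fun l => (l.map g).sum) '' maxChainsThru e))

/-- The indicator function of a subset. -/
noncomputable def ind (S : Set P) : P → ℝ := fun x => if x ∈ S then 1 else 0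

def listComp {α : Type*} (fs : List (α → α)) : α → α := fs.foldr (· ∘ ·) id

/-!
Splitting off the first element of a saturated chain `x ⋖ y ⋖ ⋯` gives the recursion
`OR(g)(x) = g(x) + max_{y ⋗ x} OR(g)(y)`, where for maximal `x` the maximum is
over `y = M̂` alone and is `0`.
Read backwards, this says `OR⁻¹ ∘ OR = id`; induction from the top of `P` gives
`OR ∘ OR⁻¹ = id`. `OR(g)` is antitone because `g ≥ 0` and at most `1` because saturated
chains are chains. `OR⁻¹(f) ≥ 0` because `f` is antitone, and along a chain
`x_1 < ⋯ < x_n` the bounds `OR⁻¹(f)(x_i) ≤ f(x_i) - f(x_{i+1})` telescope to `f(x_1) ≤ 1`.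
The statements about `OP` are those about `OR` for the dual poset, in which saturated chains
are read backwards.
-/

theorem WithTop.isMin_coe_iff {α : Type*} [Preorder α] {a : α} :
    IsMin (a : WithTop α) ↔ IsMin a := by
  simp [IsMin]

section CoverValues

lemma setOf_toHat_covBy_hatOR (f : P → ℝ) (x : P) :
    {v : ℝ | ∃ y : PHat P, toHat x ⋖ y ∧ v = hatOR f y}
      = if IsMax x then {0} else f '' {y | x ⋖ y} := by
  ext v
  split_ifs with hx
  · have : ∀ y, ¬ x ⋖ y := fun y h => hx.not_lt h.lt
    simp [WithBot.exists, WithTop.exists, toHat, hatOR, -covBy_top_iff, hx, this]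
  · simp [WithBot.exists, WithTop.exists, toHat, hatOR, -covBy_top_iff, hx, eq_comm]

lemma setOf_covBy_toHat_hatOP (f : P → ℝ) (x : P) :
    {v : ℝ | ∃ y : PHat P, y ⋖ toHat x ∧ v = hatOP f y}
      = if IsMin x then {0} else f '' {y | y ⋖ x} := by
  ext v
  split_ifs with hx
  · have : ∀ y, ¬ y ⋖ x := fun y h => hx.not_lt h.lt
    simp [WithBot.exists, WithTop.exists, toHat, hatOP, -bot_covBy_iff,
      WithTop.isMin_coe_iff, hx, this]
  · simp [WithBot.exists, WithTop.exists, toHat, hatOP, -bot_covBy_iff,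
      WithTop.isMin_coe_iff, hx, eq_comm]

variable {f : P → ℝ} {x : P}

lemma ORinv_of_isMax (hx : IsMax x) : ORinv f x = f x := by
  simp [ORinv, setOf_toHat_covBy_hatOR, hx]

lemma ORinv_of_not_isMax (hx : ¬IsMax x) : ORinv f x = f x - sSup (f '' {y | x ⋖ y}) := by
  simp [ORinv, setOf_toHat_covBy_hatOR, hx]

lemma OPinv_of_isMin (hx : IsMin x) : OPinv f x = f x := by
  simp [OPinv, setOf_covBy_toHat_hatOP, hx]

lemma OPinv_of_not_isMin (hx : ¬IsMin x) : OPinv f x = f x - sSup (f '' {y | y ⋖ x}) := by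
  simp [OPinv, setOf_covBy_toHat_hatOP, hx]

end CoverValues

section SaturatedChains

lemma mem_maxChainsFrom {x : P} {l : List P} :
    l ∈ maxChainsFrom x ↔
      l.IsChain (· ⋖ ·) ∧ l.head? = some x ∧ ∃ z, l.getLast? = some z ∧ IsMax z :=
  Iff.rfl

lemma mem_maxChainsTo {x : P} {l : List P} :
    l ∈ maxChainsTo x ↔
      l.IsChain (· ⋖ ·) ∧ (∃ a, l.head? = some a ∧ IsMin a) ∧ l.getLast? = some x :=
  Iff.rfl

lemma mem_maxChainsFrom_iff {x : P} {l : List P} :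
    l ∈ maxChainsFrom x ↔
      (l = [x] ∧ IsMax x) ∨ ∃ y t, x ⋖ y ∧ t ∈ maxChainsFrom y ∧ l = x :: t := by
  rcases l with _ | ⟨a, _ | ⟨b, t⟩⟩ <;> aesop (add norm simp mem_maxChainsFrom)

lemma maxChainsFrom_of_isMax {x : P} (hx : IsMax x) : maxChainsFrom x = {[x]} := by
  ext l
  have : ∀ y, ¬x ⋖ y := fun y h => hx.not_lt h.lt
  rw [mem_maxChainsFrom_iff]
  simp [hx, this]

variable [Finite P]

lemma maxChainsFrom_finite (x : P) : (maxChainsFrom x).Finite :=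
  (List.finite_length_le P (Nat.card P)).subset fun _ hl =>
    ((hl.1.imp fun _ _ h => h.lt).pairwise.nodup).length_le_natCard

lemma maxChainsFrom_nonempty (x : P) : (maxChainsFrom x).Nonempty := by
  induction x using WellFoundedGT.induction with
  | _ x ih =>
  by_cases hx : IsMax x
  · exact ⟨[x], mem_maxChainsFrom_iff.2 (.inl ⟨rfl, hx⟩)⟩
  · obtain ⟨y, hxy⟩ := exists_covBy_of_wellFoundedLT hx
    obtain ⟨t, ht⟩ := ih y hxy.lt
    exact ⟨x :: t, mem_maxChainsFrom_iff.2 (.inr ⟨y, t, hxy, ht, rfl⟩)⟩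

end SaturatedChains

section ORmap

variable {g : P → ℝ} {x : P}

lemma ORmap_of_isMax (hx : IsMax x) : ORmap g x = g x := by
  simp [ORmap, maxChainsFrom_of_isMax hx]

variable [Finite P]

lemma sum_map_le_ORmap {l : List P} (hl : l ∈ maxChainsFrom x) : (l.map g).sum ≤ ORmap g x :=
  le_csSup ((maxChainsFrom_finite x).image _).bddAbove ⟨l, hl, rfl⟩

lemma ORmap_le_sSup_of_covBy {y : P} (hxy : x ⋖ y) :
    ORmap g y ≤ sSup (ORmap g '' {y | x ⋖ y}) :=
  le_csSup ((Set.toFinite _).image _).bddAbove ⟨y, hxy, rfl⟩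

lemma ORmap_of_not_isMax (hx : ¬IsMax x) :
    ORmap g x = g x + sSup (ORmap g '' {y | x ⋖ y}) := by
  apply le_antisymm
  · refine csSup_le ((maxChainsFrom_nonempty x).image _) ?_
    rintro _ ⟨l, hl, rfl⟩
    obtain ⟨rfl, hx'⟩ | ⟨y, t, hxy, ht, rfl⟩ := mem_maxChainsFrom_iff.1 hl
    · exact absurd hx' hx
    · have := (sum_map_le_ORmap (g := g) ht).trans (ORmap_le_sSup_of_covBy hxy)
      simp only [List.map_cons, List.sum_cons]
      linarith
  · rw [← le_sub_iff_add_le']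
    refine csSup_le (Set.Nonempty.image _ (exists_covBy_of_wellFoundedLT hx)) ?_
    rintro _ ⟨y, hxy, rfl⟩
    refine csSup_le ((maxChainsFrom_nonempty y).image _) ?_
    rintro _ ⟨t, ht, rfl⟩
    have := sum_map_le_ORmap (g := g) (mem_maxChainsFrom_iff.2 (.inr ⟨y, t, hxy, ht, rfl⟩))
    simp only [List.map_cons, List.sum_cons] at this
    linarith

variable (g) in
lemma ORinv_ORmap : ORinv (ORmap g) = g := by
  funext x
  by_cases hx : IsMax x
  · rw [ORinv_of_isMax hx, ORmap_of_isMax hx]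
  · rw [ORinv_of_not_isMax hx, ORmap_of_not_isMax hx, add_sub_cancel_right]

lemma ORmap_ORinv (f : P → ℝ) : ORmap (ORinv f) = f := by
  funext x
  induction x using WellFoundedGT.induction with
  | _ x ih =>
  by_cases hx : IsMax x
  · rw [ORmap_of_isMax hx, ORinv_of_isMax hx]
  · have : ORmap (ORinv f) '' {y | x ⋖ y} = f '' {y | x ⋖ y} :=
      Set.image_congr fun y hy => ih y (CovBy.lt hy)
    rw [ORmap_of_not_isMax hx, this, ORinv_of_not_isMax hx, sub_add_cancel]

lemma ORmap_nonneg (hg : ∀ x, 0 ≤ g x) (x : P) : 0 ≤ ORmap g x := by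
  obtain ⟨l, hl⟩ := maxChainsFrom_nonempty x
  exact (List.sum_nonneg (by simpa using fun a _ => hg a)).trans (sum_map_le_ORmap hl)

lemma ORmap_le_one (hg : InChainPolytope P g) (x : P) : ORmap g x ≤ 1 :=
  csSup_le ((maxChainsFrom_nonempty x).image _) <| by
    rintro _ ⟨l, hl, rfl⟩
    exact hg.2 l (hl.1.imp fun _ _ h => h.lt)

lemma ORmap_le_of_covBy (hg : ∀ x, 0 ≤ g x) {y : P} (hxy : x ⋖ y) :
    ORmap g y ≤ ORmap g x := by
  have := ORmap_le_sSup_of_covBy (g := g) hxy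
  rw [ORmap_of_not_isMax hxy.lt.not_isMax]
  linarith [hg x]

lemma ORmap_antitone (hg : ∀ x, 0 ≤ g x) : Antitone (ORmap g) :=
  letI := LocallyFiniteOrder.ofFiniteIcc fun a b : P => Set.toFinite (Set.Icc a b)
  (antitone_iff_forall_covBy _).2 fun _ _ => ORmap_le_of_covBy hg

lemma inORPolytope_ORmap (hg : InChainPolytope P g) : InORPolytope P (ORmap g) :=
  ⟨fun x => ⟨ORmap_nonneg hg.1 x, ORmap_le_one hg x⟩, ORmap_antitone hg.1⟩

end ORmap

section ORinv

variable [Finite P] {f : P → ℝ}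

lemma ORinv_nonneg (hf : Antitone f) (hf₀ : ∀ x, 0 ≤ f x) (x : P) : 0 ≤ ORinv f x := by
  by_cases hx : IsMax x
  · rw [ORinv_of_isMax hx]
    exact hf₀ x
  · rw [ORinv_of_not_isMax hx, sub_nonneg]
    refine csSup_le (Set.Nonempty.image _ (exists_covBy_of_wellFoundedLT hx)) ?_
    rintro _ ⟨y, hxy, rfl⟩
    exact hf (CovBy.le hxy)

lemma ORinv_le_self (hf₀ : ∀ x, 0 ≤ f x) (x : P) : ORinv f x ≤ f x := by
  by_cases hx : IsMax x
  · rw [ORinv_of_isMax hx]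
  · obtain ⟨y, hxy⟩ := exists_covBy_of_wellFoundedLT hx
    rw [ORinv_of_not_isMax hx, sub_le_self_iff]
    exact (hf₀ y).trans (le_csSup ((Set.toFinite _).image _).bddAbove ⟨y, hxy, rfl⟩)

lemma ORinv_add_le_of_lt (hf : Antitone f) {x z : P} (hxz : x < z) : ORinv f x + f z ≤ f x := by
  obtain ⟨y, hxy, hyz⟩ := exists_covBy_le_of_lt hxz
  have := le_csSup ((Set.toFinite {y | x ⋖ y}).image f).bddAbove ⟨y, hxy, rfl⟩
  rw [ORinv_of_not_isMax hxz.not_isMax]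
  linarith [hf hyz]

lemma sum_map_ORinv_le (hf : Antitone f) (hf₀ : ∀ x, 0 ≤ f x) {x : P} {l : List P}
    (hl : (x :: l).IsChain (· < ·)) : ((x :: l).map (ORinv f)).sum ≤ f x := by
  induction l generalizing x with
  | nil => simpa using ORinv_le_self hf₀ x
  | cons y l ih =>
    rw [List.isChain_cons_cons] at hl
    have := ih hl.2
    simp only [List.map_cons, List.sum_cons] at this ⊢
    linarith [ORinv_add_le_of_lt hf hl.1]

lemma inChainPolytope_ORinv (hf : InORPolytope P f) : InChainPolytope P (ORinv f) := by
  have hf₀ x : 0 ≤ f x := (hf.1 x).1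
  refine ⟨ORinv_nonneg hf.2 hf₀, fun l hl => ?_⟩
  cases l with
  | nil => simp
  | cons x l => exact (sum_map_ORinv_le hf.2 hf₀ hl).trans (hf.1 x).2

end ORinv

section Duality

open OrderDual

lemma mem_maxChainsTo_iff_dual {x : P} {l : List P} :
    l ∈ maxChainsTo x ↔ (l.map toDual).reverse ∈ maxChainsFrom (toDual x) := by
  simp [mem_maxChainsTo, mem_maxChainsFrom, List.isChain_reverse, List.isChain_map,
    List.head?_reverse, List.getLast?_reverse, and_comm]

lemma OPmap_comp_ofDual (g : P → ℝ) : OPmap g ∘ ofDual = ORmap (g ∘ ofDual) := by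
  funext x
  let D : List P → List Pᵒᵈ := fun l => (l.map toDual).reverse
  have hD : Function.Surjective D := fun m => ⟨(m.map ofDual).reverse, by simp [D]⟩
  have hsum : (fun l : List P => (l.map g).sum) = (fun m => (m.map (g ∘ ofDual)).sum) ∘ D := by
    funext l
    simp [D, Function.comp_def]
  have hchains : maxChainsTo (ofDual x) = D ⁻¹' maxChainsFrom x := by
    ext l
    exact mem_maxChainsTo_iff_dual
  simp only [Function.comp_apply, OPmap, ORmap, hsum, hchains, Set.image_comp,
    Set.image_preimage_eq _ hD]

lemma OPinv_comp_ofDual (f : P → ℝ) : OPinv f ∘ ofDual = ORinv (f ∘ ofDual) := by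
  funext x
  by_cases hx : IsMax x
  · rw [Function.comp_apply, OPinv_of_isMin (isMin_ofDual_iff.2 hx), ORinv_of_isMax hx]
    rfl
  · have : f '' {y | y ⋖ ofDual x} = (f ∘ ofDual) '' {y | x ⋖ y} :=
      Set.ext fun v => exists_congr fun y => and_congr_left' (ofDual_covBy_ofDual_iff (b := x))
    rw [Function.comp_apply, OPinv_of_not_isMin (mt isMin_ofDual_iff.1 hx),
      ORinv_of_not_isMax hx, this]
    rfl

lemma InChainPolytope.comp_ofDual {g : P → ℝ} (hg : InChainPolytope P g) :
    InChainPolytope Pᵒᵈ (g ∘ ofDual) := by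
  refine ⟨fun x => hg.1 (ofDual x), fun l hl => ?_⟩
  have hl' : (l.map ofDual).reverse.IsChain (· < ·) := by
    simpa [List.isChain_reverse, List.isChain_map] using show l.IsChain (· < ·) from hl
  simpa using hg.2 _ hl'

lemma inChainPolytope_comp_ofDual_iff {g : P → ℝ} :
    InChainPolytope Pᵒᵈ (g ∘ ofDual) ↔ InChainPolytope P g :=
  -- the forward direction is `comp_ofDual` for `Pᵒᵈ`, as `Pᵒᵈᵒᵈ` is `P` by definition
  ⟨InChainPolytope.comp_ofDual, InChainPolytope.comp_ofDual⟩

lemma inOPPolytope_iff_inORPolytope_comp_ofDual {f : P → ℝ} :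
    InOPPolytope P f ↔ InORPolytope Pᵒᵈ (f ∘ ofDual) :=
  and_congr ⟨fun h x => h (ofDual x), fun h x => h (toDual x)⟩ antitone_comp_ofDual_iff.symm

end Duality

/-- The transfer maps `OR : C(P) → OR(P)` and `OP : C(P) → OP(P)` are bijections
between the chain polytope and the order-reversing (resp. order-preserving) polytope,
with inverses `OR⁻¹` and `OP⁻¹` as given. -/
theorem transfer_maps_are_bijections (P : Type*) [PartialOrder P] [Fintype P] :
    ((∀ g : P → ℝ, InChainPolytope P g → InORPolytope P (ORmap g)) ∧
     (∀ f : P → ℝ, InORPolytope P f → InChainPolytope P (ORinv f)) ∧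
     (∀ g : P → ℝ, InChainPolytope P g → ORinv (ORmap g) = g) ∧
     (∀ f : P → ℝ, InORPolytope P f → ORmap (ORinv f) = f)) ∧
    ((∀ g : P → ℝ, InChainPolytope P g → InOPPolytope P (OPmap g)) ∧
     (∀ f : P → ℝ, InOPPolytope P f → InChainPolytope P (OPinv f)) ∧
     (∀ g : P → ℝ, InChainPolytope P g → OPinv (OPmap g) = g) ∧
     (∀ f : P → ℝ, InOPPolytope P f → OPmap (OPinv f) = f)) := by
  have comp_ofDual_injective :=
    (OrderDual.ofDual (α := P)).surjective.injective_comp_right (γ := ℝ)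
  refine ⟨⟨fun _ => inORPolytope_ORmap, fun _ => inChainPolytope_ORinv,
    fun g _ => ORinv_ORmap g, fun f _ => ORmap_ORinv f⟩, ⟨fun g hg => ?_, fun f hf => ?_,
    fun g _ => comp_ofDual_injective ?_, fun f _ => comp_ofDual_injective ?_⟩⟩
  · rw [inOPPolytope_iff_inORPolytope_comp_ofDual, OPmap_comp_ofDual]
    exact inORPolytope_ORmap (inChainPolytope_comp_ofDual_iff.2 hg)
  · rw [← inChainPolytope_comp_ofDual_iff, OPinv_comp_ofDual]
    exact inChainPolytope_ORinv (inOPPolytope_iff_inORPolytope_comp_ofDual.1 hf)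
  · simp only [OPinv_comp_ofDual, OPmap_comp_ofDual, ORinv_ORmap]
  · simp only [OPmap_comp_ofDual, OPinv_comp_ofDual, ORmap_ORinv]
end

section
/- Let P be a finite poset, f ∈ OR(P), and e ∈ P. Define h : P → [0,1] by h(x) = f(x) for x ≠ e and h(e) = max{ f(y) | y ⋗ e in P̂ } + min{ f(y) | y ⋖ e in P̂ } − f(e), using the extension f(m̂) = 1, f(M̂) = 0. Then: (1) h ∈ OR(P); and (2) if f is the indicator function of an order ideal I ∈ J(P), then h is the indicator function of t_e(I), where t_e is the combinatorial order ideal toggle. -/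
open scoped Classical

variable {P : Type*} [PartialOrder P]

abbrev OrderIdealSub (P : Type*) [PartialOrder P] : Type _ := {I : Set P // IsLowerSet I}

abbrev AntichainSub (P : Type*) [PartialOrder P] : Type _ := {A : Set P // IsAntichain (· ≤ ·) A}

noncomputable def togFun (e : P) (I : OrderIdealSub P) : OrderIdealSub P :=
  if _h : e ∈ I.1 then
    if h2 : IsLowerSet (I.1 \ {e}) then ⟨I.1 \ {e}, h2⟩ else I
  else
    if h2 : IsLowerSet (insert e I.1) then ⟨insert e I.1, h2⟩ else I

noncomputable def atogFun (e : P) (A : AntichainSub P) : AntichainSub P :=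
  if _h : e ∈ A.1 then ⟨A.1 \ {e}, A.2.subset Set.diff_subset⟩
  else if h2 : IsAntichain (· ≤ ·) (insert e A.1) then ⟨insert e A.1, h2⟩
  else A

section AuxToggle

variable {P : Type*} [PartialOrder P]

lemma hatOR_toHat' (f : P → ℝ) (x : P) : hatOR f (toHat x) = f x := rfl

lemma hatOR_bot' (f : P → ℝ) : hatOR f ⊥ = 1 := rfl

lemma hatOR_topcoe (f : P → ℝ) : hatOR f (((⊤ : WithTop P) : PHat P)) = 0 := rfl

lemma hatOR_bounds {f : P → ℝ} (hf : InORPolytope P f) (y : PHat P) :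
    0 ≤ hatOR f y ∧ hatOR f y ≤ 1 := by
  induction y using WithBot.recBotCoe with
  | bot => exact ⟨by rw [hatOR_bot']; norm_num, le_of_eq (hatOR_bot' f)⟩
  | coe w =>
    induction w using WithTop.recTopCoe with
    | top => exact ⟨le_of_eq (hatOR_topcoe f).symm, le_trans (le_of_eq (hatOR_topcoe f)) zero_le_one⟩
    | coe v => exact hf.1 v

lemma hatOR_anti {f : P → ℝ} (hf : InORPolytope P f) {a b : PHat P} (hab : a ≤ b) :
    hatOR f b ≤ hatOR f a := by
  induction a using WithBot.recBotCoe with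
  | bot => exact le_trans (hatOR_bounds hf b).2 (le_of_eq (hatOR_bot' f).symm)
  | coe wa =>
    induction b using WithBot.recBotCoe with
    | bot => exact absurd hab (by simp)
    | coe wb =>
      rw [WithBot.coe_le_coe] at hab
      induction wb using WithTop.recTopCoe with
      | top => exact le_trans (le_of_eq (hatOR_topcoe f)) (hatOR_bounds hf _).1
      | coe vb =>
        induction wa using WithTop.recTopCoe with
        | top => exact absurd hab (by simp)
        | coe va =>
          rw [WithTop.coe_le_coe] at hab
          exact hf.2 hab

lemma toHat_lt_iff {a b : P} : toHat a < toHat b ↔ a < b := by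
  simp [toHat]

lemma toHat_lt_top (e : P) : toHat e < ((⊤ : WithTop P) : PHat P) :=
  WithBot.coe_lt_coe.mpr (WithTop.coe_lt_top e)

lemma bot_lt_toHat (e : P) : (⊥ : PHat P) < toHat e := WithBot.bot_lt_coe _

lemma toHat_covBy {a b : P} (h : a ⋖ b) : toHat a ⋖ toHat b :=
  WithBot.coe_covBy_coe.mpr (WithTop.coe_covBy_coe.mpr h)

lemma lt_toHat_cases {y : PHat P} {e : P} (h : y < toHat e) :
    y = ⊥ ∨ ∃ v : P, y = toHat v ∧ v < e := by
  induction y using WithBot.recBotCoe with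
  | bot => exact Or.inl rfl
  | coe w =>
    induction w using WithTop.recTopCoe with
    | top => exact absurd h (by simp [toHat])
    | coe v => exact Or.inr ⟨v, rfl, toHat_lt_iff.mp h⟩

lemma toHat_lt_cases {y : PHat P} {e : P} (h : toHat e < y) :
    y = ((⊤ : WithTop P) : PHat P) ∨ ∃ v : P, y = toHat v ∧ e < v := by
  induction y using WithBot.recBotCoe with
  | bot => exact absurd h (by simp)
  | coe w =>
    induction w using WithTop.recTopCoe with
    | top => exact Or.inl rfl
    | coe v => exact Or.inr ⟨v, rfl, toHat_lt_iff.mp h⟩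

lemma le_toHat_cases {y : PHat P} {z : P} (h : y ≤ toHat z) :
    y = ⊥ ∨ ∃ v : P, y = toHat v ∧ v ≤ z := by
  induction y using WithBot.recBotCoe with
  | bot => exact Or.inl rfl
  | coe w =>
    induction w using WithTop.recTopCoe with
    | top => exact absurd h (by simp [toHat])
    | coe v =>
      exact Or.inr ⟨v, rfl, WithTop.coe_le_coe.mp (WithBot.coe_le_coe.mp h)⟩

/-- The set of values of `hatOR f` on covers of `toHat e`. -/
def upSet (f : P → ℝ) (e : P) : Set ℝ :=
  {v : ℝ | ∃ y : PHat P, toHat e ⋖ y ∧ v = hatOR f y}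

/-- The set of values of `hatOR f` on elements covered by `toHat e`. -/
def downSet (f : P → ℝ) (e : P) : Set ℝ :=
  {v : ℝ | ∃ y : PHat P, y ⋖ toHat e ∧ v = hatOR f y}

lemma tPL_apply_self (e : P) (f : P → ℝ) :
    tPL e f e = sSup (upSet f e) + sInf (downSet f e) - f e := by
  rw [tPL, Function.update_self]; rfl

lemma tPL_apply_ne (e : P) (f : P → ℝ) {x : P} (hx : x ≠ e) :
    tPL e f x = f x :=
  Function.update_of_ne hx _ _

end AuxToggle

/-- For `f` in the order-reversing polytope and `e ∈ P`, the function `h` agreeing with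
`f` away from `e` and with `h(e) = max{f(y) | y ⋗ e in P̂} + min{f(y) | y ⋖ e in P̂} - f(e)`
is again in the order-reversing polytope; and if `f` is the indicator function of an
order ideal `I`, then `h` is the indicator function of `t_e(I)`. -/
theorem tPL_mem_and_restricts_to_toggle
    (P : Type*) [PartialOrder P] [Fintype P] (e : P) (f : P → ℝ)
    (hf : InORPolytope P f) :
    InORPolytope P (tPL e f) ∧
    ∀ I : OrderIdealSub P, f = ind I.1 → tPL e f = ind (togFun e I).1 := by
  classical
  -- nonemptiness and bounds for the cover-value sets
  have hAne : (upSet f e).Nonempty := by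
    obtain ⟨y, hy, -⟩ := exists_covBy_le_of_lt (toHat_lt_top e)
    exact ⟨_, y, hy, rfl⟩
  have hBne : (downSet f e).Nonempty := by
    obtain ⟨y, -, hy⟩ := exists_le_covBy_of_lt (bot_lt_toHat e)
    exact ⟨_, y, hy, rfl⟩
  have hAbdd : BddAbove (upSet f e) := by
    refine ⟨1, ?_⟩
    rintro v ⟨y, hy, rfl⟩
    exact (hatOR_bounds hf y).2
  have hBbdd : BddBelow (downSet f e) := by
    refine ⟨0, ?_⟩
    rintro v ⟨y, hy, rfl⟩
    exact (hatOR_bounds hf y).1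
  have hS_le : sSup (upSet f e) ≤ f e := by
    refine csSup_le hAne ?_
    rintro v ⟨y, hy, rfl⟩
    exact hatOR_anti hf hy.le
  have hS_nonneg : (0 : ℝ) ≤ sSup (upSet f e) := by
    obtain ⟨v, hv⟩ := hAne
    obtain ⟨y, hy, rfl⟩ := hv
    exact le_trans (hatOR_bounds hf y).1 (le_csSup hAbdd ⟨y, hy, rfl⟩)
  have hI_ge : f e ≤ sInf (downSet f e) := by
    refine le_csInf hBne ?_
    rintro v ⟨y, hy, rfl⟩
    exact hatOR_anti hf hy.le
  have hI_le1 : sInf (downSet f e) ≤ 1 := by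
    obtain ⟨v, hv⟩ := hBne
    obtain ⟨y, hy, rfl⟩ := hv
    exact le_trans (csInf_le hBbdd ⟨y, hy, rfl⟩) (hatOR_bounds hf y).2
  refine ⟨⟨?_, ?_⟩, ?_⟩
  · -- bounds
    intro x
    by_cases hx : x = e
    · subst hx
      rw [tPL_apply_self]
      have h1 := (hf.1 x).1
      have h2 := (hf.1 x).2
      constructor <;> linarith
    · rw [tPL_apply_ne e f hx]
      exact hf.1 x
  · -- order-reversing
    intro x y hxy
    by_cases hx : x = e <;> by_cases hy : y = e
    · subst hx; subst hy; exact le_refl _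
    · subst hx
      have hlt : x < y := lt_of_le_of_ne hxy (Ne.symm hy)
      rw [tPL_apply_ne x f hy, tPL_apply_self]
      have hfyS : f y ≤ sSup (upSet f x) := by
        obtain ⟨c, hc, hcy⟩ := exists_covBy_le_of_lt (toHat_lt_iff.mpr hlt)
        exact le_trans (hatOR_anti hf hcy) (le_csSup hAbdd ⟨c, hc, rfl⟩)
      linarith
    · subst hy
      have hlt : x < y := lt_of_le_of_ne hxy hx
      rw [tPL_apply_ne y f hx, tPL_apply_self]
      have hIfx : sInf (downSet f y) ≤ f x := by
        obtain ⟨c, hxc, hc⟩ := exists_le_covBy_of_lt (toHat_lt_iff.mpr hlt)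
        exact le_trans (csInf_le hBbdd ⟨c, hc, rfl⟩) (hatOR_anti hf hxc)
      linarith
    · rw [tPL_apply_ne e f hx, tPL_apply_ne e f hy]
      exact hf.2 hxy
  · -- restriction to the combinatorial toggle
    intro I hfI
    subst hfI
    by_cases heI : e ∈ I.1
    · have hfe : ind I.1 e = 1 := if_pos heI
      have hIv1 : sInf (downSet (ind I.1) e) = 1 := le_antisymm hI_le1 (hfe ▸ hI_ge)
      by_cases hA : ∃ z ∈ I.1, e < z
      · obtain ⟨z, hzI, hez⟩ := hA
        obtain ⟨c, hc, hcz⟩ := exists_covBy_le_of_lt (toHat_lt_iff.mpr hez)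
        rcases le_toHat_cases hcz with rfl | ⟨v, rfl, hvz⟩
        · exact absurd hc.lt (by simp)
        have hvI : v ∈ I.1 := I.2 hvz hzI
        have h1A : (1 : ℝ) ∈ upSet (ind I.1) e :=
          ⟨toHat v, hc, by simp [hatOR_toHat', ind, hvI]⟩
        have hSv1 : sSup (upSet (ind I.1) e) = 1 := by
          refine le_antisymm ?_ (le_csSup hAbdd h1A)
          refine csSup_le hAne ?_
          rintro v ⟨y, hy, rfl⟩
          exact (hatOR_bounds hf y).2
        have hev : e < v := toHat_lt_iff.mp hc.lt
        have hnl : ¬ IsLowerSet (I.1 \ {e}) := by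
          intro hl
          have := hl hev.le ⟨hvI, by simpa using hev.ne'⟩
          exact this.2 rfl
        have htog : (togFun e I).1 = I.1 := by simp [togFun, heI, hnl]
        funext x
        by_cases hx : x = e
        · subst hx
          rw [tPL_apply_self, hSv1, hIv1, hfe, htog, ind, if_pos heI]
          norm_num
        · rw [tPL_apply_ne e _ hx, htog]
      · have hSv0 : sSup (upSet (ind I.1) e) = 0 := by
          refine le_antisymm ?_ hS_nonneg
          refine csSup_le hAne ?_
          rintro v ⟨y, hy, rfl⟩
          rcases toHat_lt_cases hy.lt with rfl | ⟨w, rfl, hew⟩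
          · exact le_trans (le_of_eq (hatOR_topcoe _)) le_rfl
          · have hwI : w ∉ I.1 := fun hw => hA ⟨w, hw, hew⟩
            simp [hatOR_toHat', ind, hwI]
        have hlow : IsLowerSet (I.1 \ {e}) := by
          intro a b hba ha
          refine ⟨I.2 hba ha.1, ?_⟩
          intro hbe
          rw [Set.mem_singleton_iff] at hbe
          subst hbe
          have hane : b ≠ a := fun h => ha.2 (by simp [← h])
          exact hA ⟨a, ha.1, lt_of_le_of_ne hba hane⟩
        have htog : (togFun e I).1 = I.1 \ {e} := by simp [togFun, heI, hlow]
        funext x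
        by_cases hx : x = e
        · subst hx
          rw [tPL_apply_self, hSv0, hIv1, hfe, htog, ind]
          norm_num
        · rw [tPL_apply_ne e _ hx, htog]
          simp [ind, Set.mem_diff, hx]
    · have hfe : ind I.1 e = 0 := if_neg heI
      have hSv0 : sSup (upSet (ind I.1) e) = 0 :=
        le_antisymm (hfe ▸ hS_le) hS_nonneg
      by_cases hB : ∀ y : P, y < e → y ∈ I.1
      · have hIv1 : sInf (downSet (ind I.1) e) = 1 := by
          refine le_antisymm hI_le1 ?_
          refine le_csInf hBne ?_
          rintro v ⟨y, hy, rfl⟩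
          rcases lt_toHat_cases hy.lt with rfl | ⟨w, rfl, hwe⟩
          · exact le_of_eq (hatOR_bot' _).symm
          · simp [hatOR_toHat', ind, hB w hwe]
        have hlow : IsLowerSet (insert e I.1) := by
          intro a b hba ha
          rcases Set.mem_insert_iff.mp ha with rfl | haI
          · rcases eq_or_lt_of_le hba with rfl | hlt
            · exact Set.mem_insert _ _
            · exact Set.mem_insert_of_mem _ (hB b hlt)
          · exact Set.mem_insert_of_mem _ (I.2 hba haI)
        have htog : (togFun e I).1 = insert e I.1 := by simp [togFun, heI, hlow]
        funext x
        by_cases hx : x = e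
        · subst hx
          rw [tPL_apply_self, hSv0, hIv1, hfe, htog, ind, if_pos (Set.mem_insert _ _)]
          norm_num
        · rw [tPL_apply_ne e _ hx, htog]
          simp [ind, Set.mem_insert_iff, hx]
      · push_neg at hB
        obtain ⟨y, hye, hyI⟩ := hB
        obtain ⟨c, hyc, hce⟩ := exists_le_covBy_of_lt hye
        have hcI : c ∉ I.1 := fun h => hyI (I.2 hyc h)
        have h0B : (0 : ℝ) ∈ downSet (ind I.1) e :=
          ⟨toHat c, toHat_covBy hce, by simp [hatOR_toHat', ind, hcI]⟩
        have hIv0 : sInf (downSet (ind I.1) e) = 0 :=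
          le_antisymm (csInf_le hBbdd h0B) (hfe ▸ hI_ge)
        have hnl : ¬ IsLowerSet (insert e I.1) := by
          intro hl
          rcases Set.mem_insert_iff.mp (hl hye.le (Set.mem_insert _ _)) with h | h
          · exact absurd h hye.ne
          · exact hyI h
        have htog : (togFun e I).1 = I.1 := by simp [togFun, heI, hnl]
        funext x
        by_cases hx : x = e
        · subst hx
          rw [tPL_apply_self, hSv0, hIv0, hfe, htog, ind, if_neg heI]
          norm_num
        · rw [tPL_apply_ne e _ hx, htog]
end

section
/- Let P be a finite poset, g ∈ C(P), and e ∈ P. Define h : P → [0,1] by h(x) = g(x) for x ≠ e and h(e) = 1 − max{ Σ_{i=1}^k g(y_i) | (y_1, …, y_k) a maximal chain of P containing e }. Then: (1) h ∈ C(P); and (2) if g is the indicator function of an antichain A ∈ A(P), then h is the indicator function of τ_e(A), where τ_e is the combinatorial antichain toggle. -/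
open scoped Classical

variable {P : Type*} [PartialOrder P]

/-!
A longest strict chain containing a given chain is saturated and runs from a minimal to a
maximal element, so every chain through `e` lies in a maximal chain through `e`. Hence, with
`M` the largest `g`-sum over maximal chains through `e`, the `g`-sum over any chain minus its
`e`-term is at most `M`, and putting `1 - M` at `e` keeps every chain sum at most `1`.
For `g = ind A` one gets `M = 1` if some element of `A` is comparable to `e` and `M = 0`
otherwise, which is exactly the case distinction of the toggle `τ_e`.
-/

theorem List.Nodup.sum_map_update {α M : Type*} [DecidableEq α] [AddCommMonoid M] {l : List α}
    (hl : l.Nodup) {a : α} (ha : a ∈ l) (f : α → M) (b : M) :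
    (l.map (Function.update f a b)).sum = b + ((l.erase a).map f).sum := by
  rw [((List.perm_cons_erase ha).map _).sum_eq, List.map_cons, List.sum_cons,
    Function.update_self, List.map_congr_left fun x hx =>
      Function.update_of_ne (fun hxa => hl.not_mem_erase (hxa ▸ hx)) b f]

theorem List.map_update_of_notMem {α β : Type*} [DecidableEq α] {l : List α} {a : α}
    (ha : a ∉ l) (f : α → β) (b : β) : l.map (Function.update f a b) = l.map f :=
  List.map_congr_left fun _ hx => Function.update_of_ne (ne_of_mem_of_not_mem hx ha) b f

theorem List.IsChain.le_or_le_of_mem {l : List P} (hl : l.IsChain (· < ·)) {x y : P}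
    (hx : x ∈ l) (hy : y ∈ l) : x ≤ y ∨ y ≤ x :=
  ((List.isChain_iff_pairwise.mp hl).imp fun h => Or.inl h.le).forall_of_forall
    (R := Relation.SymmGen (· ≤ ·)) (fun _ _ => Or.inl le_rfl) hx hy

theorem exists_isChain_lt_of_le {x y : P} (h : x ≤ y) :
    ∃ l : List P, l.IsChain (· < ·) ∧ x ∈ l ∧ y ∈ l := by
  rcases h.eq_or_lt with rfl | h
  · exact ⟨[x], List.isChain_singleton x, by simp, by simp⟩
  · exact ⟨[x, y], List.isChain_pair.mpr h, by simp, by simp⟩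

theorem exists_sublist_isChain_covBy [Fintype P] {l : List P} (hl : l.IsChain (· < ·))
    (hne : l ≠ []) :
    ∃ m, l.Sublist m ∧ m.IsChain (· ⋖ ·) ∧ (∃ a, m.head? = some a ∧ IsMin a) ∧
      ∃ z, m.getLast? = some z ∧ IsMax z := by
  obtain ⟨m, ⟨hm, hlm⟩, hmax⟩ :=
    (measure fun m : List P => Fintype.card P - m.length).wf.has_min
      {m | m.IsChain (· < ·) ∧ l.Sublist m} ⟨l, hl, .refl l⟩
  have longest : ∀ m', m'.IsChain (· < ·) → m.Sublist m' → m'.length ≤ m.length := by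
    intro m' hm' hmm'
    have hcard := (List.isChain_iff_pairwise.mp hm').nodup.length_le_card
    have hmin := hmax m' ⟨hm', hlm.trans hmm'⟩
    simp only [InvImage, WellFoundedRelation.rel] at hmin
    omega
  have hm0 : m ≠ [] := fun h => hne (List.sublist_nil.mp (h ▸ hlm))
  refine ⟨m, hlm, ?_, ?_, ?_⟩
  · refine List.isChain_iff_forall_rel_of_append_cons_cons.mpr fun a b l₁ l₂ hsplit => ?_
    subst hsplit
    refine ⟨(List.isChain_append_cons_cons.mp hm).2.1, fun c hac hcb => ?_⟩
    have := longest (l₁ ++ a :: c :: b :: l₂) (by simp_all)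
      ((List.sublist_cons_self c _).cons_cons a |>.append_left l₁)
    simp at this
  · obtain ⟨a, t, rfl⟩ := List.exists_cons_of_ne_nil hm0
    refine ⟨a, rfl, isMin_iff_forall_not_lt.mpr fun b hba => ?_⟩
    have := longest (b :: a :: t) (hm.cons_cons hba) (List.sublist_cons_self b _)
    simp at this
  · have hlast := List.getLast?_eq_some_getLast hm0
    refine ⟨m.getLast hm0, hlast, isMax_iff_forall_not_lt.mpr fun b hzb => ?_⟩
    have := longest (m ++ [b])
      (hm.append (List.isChain_singleton b) (by simpa [hlast] using hzb))
      (List.sublist_append_left m [b])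
    simp at this

theorem exists_mem_maxChainsThru [Fintype P] {l : List P} (hl : l.IsChain (· < ·)) {e : P}
    (he : e ∈ l) : ∃ m ∈ maxChainsThru e, l.Sublist m := by
  obtain ⟨m, hlm, hm, hmin, hmax⟩ := exists_sublist_isChain_covBy hl (List.ne_nil_of_mem he)
  exact ⟨m, ⟨hm, hmin, hmax, hlm.subset he⟩, hlm⟩

theorem maxChainsThru_nonempty [Fintype P] (e : P) : (maxChainsThru e).Nonempty :=
  (exists_mem_maxChainsThru (List.isChain_singleton e) (List.mem_singleton_self e)).imp
    fun _ h => h.1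

noncomputable def maxChainSum (g : P → ℝ) (e : P) : ℝ :=
  sSup ((fun l => (l.map g).sum) '' maxChainsThru e)

theorem tauPL_eq_update (e : P) (g : P → ℝ) :
    tauPL e g = Function.update g e (1 - maxChainSum g e) := rfl

namespace InChainPolytope

variable {g : P → ℝ}

theorem one_mem_upperBounds_maxChainSums (hg : InChainPolytope P g) (e : P) :
    1 ∈ upperBounds ((fun l => (l.map g).sum) '' maxChainsThru e) := by
  rintro _ ⟨m, hm, rfl⟩
  exact hg.2 m (hm.1.imp fun _ _ h => h.lt)

theorem maxChainSum_le_one [Fintype P] (hg : InChainPolytope P g) (e : P) :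
    maxChainSum g e ≤ 1 :=
  csSup_le ((maxChainsThru_nonempty e).image _) (hg.one_mem_upperBounds_maxChainSums e)

theorem sum_le_maxChainSum [Fintype P] (hg : InChainPolytope P g) {l : List P}
    (hl : l.IsChain (· < ·)) {e : P} (he : e ∈ l) : (l.map g).sum ≤ maxChainSum g e := by
  obtain ⟨m, hm, hlm⟩ := exists_mem_maxChainsThru hl he
  refine ((hlm.map g).sum_le_sum ?_).trans
    (le_csSup ⟨1, hg.one_mem_upperBounds_maxChainSums e⟩ ⟨m, hm, rfl⟩)
  simpa using fun x _ => hg.1 x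

theorem tauPL [Fintype P] (hg : InChainPolytope P g) (e : P) : InChainPolytope P (tauPL e g) := by
  rw [tauPL_eq_update]
  refine ⟨(Function.forall_update_iff g fun _ v => 0 ≤ v).mpr
    ⟨sub_nonneg.mpr (hg.maxChainSum_le_one e), fun x _ => hg.1 x⟩, fun l hl => ?_⟩
  by_cases he : e ∈ l
  · have hnd : l.Nodup := (List.isChain_iff_pairwise.mp hl).nodup
    calc (l.map (Function.update g e (1 - maxChainSum g e))).sum
        = 1 - maxChainSum g e + ((l.erase e).map g).sum := hnd.sum_map_update he g _
      _ ≤ 1 - maxChainSum g e + (l.map g).sum := by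
        gcongr
        exact ((List.erase_sublist).map g).sum_le_sum (by simpa using fun x _ => hg.1 x)
      _ ≤ 1 - maxChainSum g e + maxChainSum g e := by gcongr; exact hg.sum_le_maxChainSum hl he
      _ = 1 := sub_add_cancel 1 _
  · rw [List.map_update_of_notMem he]
    exact hg.2 l hl

end InChainPolytope

theorem update_ind_zero {α : Type*} (S : Set α) (e : α) :
    Function.update (ind S) e 0 = ind (S \ {e}) := by
  ext x
  rcases eq_or_ne x e with rfl | hx <;> simp [ind, *]

theorem update_ind_one {α : Type*} (S : Set α) (e : α) :
    Function.update (ind S) e 1 = ind (insert e S) := by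
  ext x
  rcases eq_or_ne x e with rfl | hx <;> simp [ind, *]

theorem ind_nonneg {α : Type*} (S : Set α) (x : α) : 0 ≤ ind S x := by
  unfold ind; split_ifs <;> norm_num

theorem one_le_sum_map_ind {α : Type*} {S : Set α} {l : List α} {a : α} (ha : a ∈ S)
    (hal : a ∈ l) : 1 ≤ (l.map (ind S)).sum := by
  have := List.single_le_sum (by simpa using fun x _ => ind_nonneg S x) _
    (List.mem_map_of_mem (f := ind S) hal)
  rwa [ind, if_pos ha] at this

theorem IsAntichain.insert_iff {A : Set P} (hA : IsAntichain (· ≤ ·) A) {e : P} (he : e ∉ A) :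
    IsAntichain (· ≤ ·) (insert e A) ↔ ∀ a ∈ A, ¬(a ≤ e ∨ e ≤ a) := by
  rw [isAntichain_insert]
  refine ⟨fun h a ha => ?_, fun h => ⟨hA, fun a ha _ => ?_⟩⟩
  · have := h.2 ha (ne_of_mem_of_not_mem ha he).symm
    tauto
  · have := h a ha
    tauto

theorem maxChainSum_ind_eq_one [Fintype P] {A : Set P} (hA : InChainPolytope P (ind A))
    {a e : P} (ha : a ∈ A) (hae : a ≤ e ∨ e ≤ a) : maxChainSum (ind A) e = 1 := by
  obtain ⟨l, hl, hal, hel⟩ : ∃ l : List P, l.IsChain (· < ·) ∧ a ∈ l ∧ e ∈ l := by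
    rcases hae with h | h
    · exact exists_isChain_lt_of_le h
    · exact (exists_isChain_lt_of_le h).imp fun _ ⟨hl, hel, hal⟩ => ⟨hl, hal, hel⟩
  exact le_antisymm (hA.maxChainSum_le_one e)
    ((one_le_sum_map_ind ha hal).trans (hA.sum_le_maxChainSum hl hel))

theorem maxChainSum_ind_eq_zero [Fintype P] {A : Set P} {e : P}
    (h : ∀ a ∈ A, ¬(a ≤ e ∨ e ≤ a)) : maxChainSum (ind A) e = 0 := by
  have hsums : (fun l => (l.map (ind A)).sum) '' maxChainsThru e = {0} := by
    refine ((maxChainsThru_nonempty e).image _).subset_singleton_iff.mp ?_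
    rintro _ ⟨m, hm, rfl⟩
    refine List.sum_eq_zero fun _ hv => ?_
    obtain ⟨x, hx, rfl⟩ := List.mem_map.mp hv
    have hxA : x ∉ A := fun hxA =>
      h x hxA ((hm.1.imp fun _ _ h => h.lt).le_or_le_of_mem hx hm.2.2.2)
    simp [ind, hxA]
  rw [maxChainSum, hsums, csSup_singleton]

/-- For `g` in the chain polytope and `e ∈ P`, the function `h` agreeing with `g` away
from `e` and with `h(e) = 1 - max{ Σ g(y_i) | (y_1,…,y_k) maximal chain through e }`
is again in the chain polytope; and if `g` is the indicator function of an antichain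
`A`, then `h` is the indicator function of `τ_e(A)`. -/
theorem tauPL_mem_and_restricts_to_toggle
    (P : Type*) [PartialOrder P] [Fintype P] (e : P) (g : P → ℝ)
    (hg : InChainPolytope P g) :
    InChainPolytope P (tauPL e g) ∧
    ∀ A : AntichainSub P, g = ind A.1 → tauPL e g = ind (atogFun e A).1 := by
  refine ⟨hg.tauPL e, fun A hgA => ?_⟩
  subst hgA
  rw [tauPL_eq_update, atogFun]
  split_ifs with heA hins
  · rw [maxChainSum_ind_eq_one hg heA (Or.inl le_rfl), sub_self, update_ind_zero]
  · rw [maxChainSum_ind_eq_zero ((A.2.insert_iff heA).mp hins), sub_zero, update_ind_one]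
  · obtain ⟨a, ha, hae⟩ : ∃ a ∈ A.1, a ≤ e ∨ e ≤ a := by
      by_contra h
      exact hins ((A.2.insert_iff heA).mpr fun a ha hae => h ⟨a, ha, hae⟩)
    rw [maxChainSum_ind_eq_one hg ha hae, sub_self, update_ind_zero,
      Set.sdiff_singleton_eq_self heA]
end
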